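/- Let U ⊆ ℝ² be open with coordinates (u,v), and let g₁₁, g₂₂, g*₁₁, g*₂₂, k₁, k₂ : U → ℝ be smooth with g₁₁, g₂₂, g*₁₁, g*₂₂ > 0 and k₁ − k₂ nowhere zero, satisfying the Codazzi equations of the pair of surfaces M, M* with swapped principal curvatures: (k₁)_v = ((k₂−k₁)/2)(log g₁₁)_v, (k₂)_u = ((k₁−k₂)/2)(log g₂₂)_u, (k₂)_v = ((k₁−k₂)/2)(log g*₁₁)_v, and (k₁)_u = ((k₂−k₁)/2)(log g*₂₂)_u. Then ∂_v( g₁₁ g*₁₁ (k₁−k₂)² ) = 0 and ∂_u( g₂₂ g*₂₂ (k₁−k₂)² ) = 0 on U; that is, g₁₁g*₁₁(k₁−k₂)² is a function of u alone and g₂₂g*₂₂(k₁−k₂)² is a function of v alone. -/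

import Mathlib

/-- Partial derivative in the `u`-direction of a function on `ℝ²`. -/
noncomputable def pu (f : ℝ × ℝ → ℝ) (p : ℝ × ℝ) : ℝ := fderiv ℝ f p (1, 0)

/-- Partial derivative in the `v`-direction of a function on `ℝ²`. -/
noncomputable def pv (f : ℝ × ℝ → ℝ) (p : ℝ × ℝ) : ℝ := fderiv ℝ f p (0, 1)

/-!
Two Codazzi equations along the same direction combine to
`(k₁ - k₂)' = -(k₁ - k₂) / 2 · (log (g₁₁ g*₁₁))'`, which says exactly that the logarithmic
derivative of `g₁₁ g*₁₁ (k₁ - k₂)²` vanishes. Applying the product rule to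
`g₁₁ g*₁₁ (k₁ - k₂)²` instead of taking its logarithm avoids dividing by `k₁ - k₂`.
-/

variable {E : Type*} [NormedAddCommGroup E] [NormedSpace ℝ E]

theorem fderiv_mul_mul_sub_sq_apply_eq_zero {f g a b : E → ℝ} {p : E} (w : E)
    (hf : DifferentiableAt ℝ f p) (hg : DifferentiableAt ℝ g p)
    (ha : DifferentiableAt ℝ a p) (hb : DifferentiableAt ℝ b p)
    (hf0 : f p ≠ 0) (hg0 : g p ≠ 0)
    (ha' : fderiv ℝ a p w = (b p - a p) / 2 * fderiv ℝ (fun q => Real.log (f q)) p w)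
    (hb' : fderiv ℝ b p w = (a p - b p) / 2 * fderiv ℝ (fun q => Real.log (g q)) p w) :
    fderiv ℝ (fun q => f q * g q * (a q - b q) ^ 2) p w = 0 := by
  have hsub : fderiv ℝ a p w - fderiv ℝ b p w
      = -(a p - b p) / 2 * (fderiv ℝ f p w / f p + fderiv ℝ g p w / g p) := by
    rw [ha', hb', fderiv.log hf hf0, fderiv.log hg hg0]
    simp only [smul_apply, smul_eq_mul]
    field_simp
    ring
  rw [((hf.hasFDerivAt.fun_mul hg.hasFDerivAt).fun_mul
    ((ha.hasFDerivAt.fun_sub hb.hasFDerivAt).pow 2)).fderiv]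
  simp only [add_apply, smul_apply, sub_apply, smul_eq_mul, hsub]
  field_simp
  ring

theorem codazzi_pair_separated_invariants
    (U : Set (ℝ × ℝ)) (hU : IsOpen U)
    (g₁₁ g₂₂ gs₁₁ gs₂₂ k₁ k₂ : ℝ × ℝ → ℝ)
    (hg₁₁ : ContDiffOn ℝ (⊤ : ℕ∞) g₁₁ U) (hg₂₂ : ContDiffOn ℝ (⊤ : ℕ∞) g₂₂ U)
    (hgs₁₁ : ContDiffOn ℝ (⊤ : ℕ∞) gs₁₁ U) (hgs₂₂ : ContDiffOn ℝ (⊤ : ℕ∞) gs₂₂ U)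
    (hk₁ : ContDiffOn ℝ (⊤ : ℕ∞) k₁ U) (hk₂ : ContDiffOn ℝ (⊤ : ℕ∞) k₂ U)
    (hg₁₁pos : ∀ p ∈ U, 0 < g₁₁ p) (hg₂₂pos : ∀ p ∈ U, 0 < g₂₂ p)
    (hgs₁₁pos : ∀ p ∈ U, 0 < gs₁₁ p) (hgs₂₂pos : ∀ p ∈ U, 0 < gs₂₂ p)
    (hCod₁ : ∀ p ∈ U, pv k₁ p = (k₂ p - k₁ p) / 2 * pv (fun q => Real.log (g₁₁ q)) p)
    (hCod₂ : ∀ p ∈ U, pu k₂ p = (k₁ p - k₂ p) / 2 * pu (fun q => Real.log (g₂₂ q)) p)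
    (hCod₃ : ∀ p ∈ U, pv k₂ p = (k₁ p - k₂ p) / 2 * pv (fun q => Real.log (gs₁₁ q)) p)
    (hCod₄ : ∀ p ∈ U, pu k₁ p = (k₂ p - k₁ p) / 2 * pu (fun q => Real.log (gs₂₂ q)) p) :
    ∀ p ∈ U,
      pv (fun q => g₁₁ q * gs₁₁ q * (k₁ q - k₂ q) ^ 2) p = 0 ∧
      pu (fun q => g₂₂ q * gs₂₂ q * (k₁ q - k₂ q) ^ 2) p = 0 := by
  intro p hp
  have hd {f : ℝ × ℝ → ℝ} (hf : ContDiffOn ℝ (⊤ : ℕ∞) f U) : DifferentiableAt ℝ f p :=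
    (hf.differentiableOn (by simp)).differentiableAt (hU.mem_nhds hp)
  constructor
  · exact fderiv_mul_mul_sub_sq_apply_eq_zero _ (hd hg₁₁) (hd hgs₁₁) (hd hk₁) (hd hk₂)
      (hg₁₁pos p hp).ne' (hgs₁₁pos p hp).ne' (hCod₁ p hp) (hCod₃ p hp)
  · simpa only [pu, sub_sq_comm (k₂ _)] using
      fderiv_mul_mul_sub_sq_apply_eq_zero _ (hd hg₂₂) (hd hgs₂₂) (hd hk₂) (hd hk₁)
        (hg₂₂pos p hp).ne' (hgs₂₂pos p hp).ne' (hCod₂ p hp) (hCod₄ p hp)
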